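/- Let $N \ge 1$, $\mathcal{I} = \mathbb{Z}/N\mathbb{Z}$, and let $(\rho_j)_{j\in\mathcal{I}}$ be non-negative, and $(u_i), (v_i)$ positive reals indexed by $\mathcal{I}$. Then $\sum_{j\in\mathcal{I}} \rho_j \sum_{i\in\mathcal{I}} (u_{i+1} v_{i+1-j} - u_i v_{i-j})(\log u_{i+1} - \log u_i) + \sum_{j\in\mathcal{I}} \rho_{-j} \sum_{i\in\mathcal{I}} (v_{i+1} u_{i+1-j} - v_i u_{i-j})(\log v_{i+1} - \log v_i) = \sum_{j\in\mathcal{I}} \rho_j \sum_{i\in\mathcal{I}} (u_{i+1} v_{i+1-j} - u_i v_{i-j})(\log(u_{i+1} v_{i+1-j}) - \log(u_i v_{i-j}))$, and this common value is at least $4\sum_{j\in\mathcal{I}} \rho_j \sum_{i\in\mathcal{I}} (\sqrt{u_{i+1} v_{i+1-j}} - \sqrt{u_i v_{i-j}})^2$ (hence non-negative). -/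

import Mathlib

/-! The identity is bookkeeping on the torus: after `j ↦ -j` and `i ↦ i - j` the second
double sum pairs the same fluxes `u (i + 1) * v (i + 1 - j) - u i * v (i - j)` as the first
one, now against the increments of `log v`, and `log (u * v) = log u + log v`.
The lower bound is termwise: with `x = (p - q) / (p + q)`, the series
`log p - log q = log (1 + x) - log (1 - x) = 2 ∑ x ^ (2k+1) / (2k+1)` gives
`x * (log p - log q) ≥ 2 x ^ 2`, which for `p = √a`, `q = √b` is
`(a - b) * (log a - log b) ≥ 4 (√a - √b) ^ 2`. -/

open Real

lemma two_mul_sq_le_mul_log_one_add_sub_log_one_sub {x : ℝ} (hx : |x| < 1) :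
    2 * x ^ 2 ≤ x * (log (1 + x) - log (1 - x)) := by
  have hterm : ∀ k : ℕ, x * (2 * (1 / (2 * k + 1)) * x ^ (2 * k + 1))
      = 2 * (1 / (2 * k + 1)) * (x ^ (k + 1)) ^ 2 := fun k => by ring
  calc 2 * x ^ 2 = x * (2 * (1 / (2 * (0 : ℕ) + 1)) * x ^ (2 * 0 + 1)) := by norm_num; ring
    _ ≤ x * (log (1 + x) - log (1 - x)) :=
      le_hasSum ((hasSum_log_sub_log_of_abs_lt_one hx).mul_left x) 0
        fun k _ => by rw [hterm]; positivity

lemma two_mul_sq_sub_le_sq_sub_sq_mul_log_sub_log {p q : ℝ} (hp : 0 < p) (hq : 0 < q) :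
    2 * (p - q) ^ 2 ≤ (p ^ 2 - q ^ 2) * (log p - log q) := by
  have hpq : 0 < p + q := add_pos hp hq
  set x := (p - q) / (p + q)
  have hx_mul : x * (p + q) = p - q := div_mul_cancel₀ _ hpq.ne'
  have hx : |x| < 1 := by
    rw [abs_div, abs_of_pos hpq, div_lt_one hpq, abs_lt]
    constructor <;> linarith
  have hlog : log (1 + x) - log (1 - x) = log p - log q := by
    rw [show 1 + x = 2 * p / (p + q) by rw [eq_div_iff hpq.ne']; linear_combination hx_mul,
      show 1 - x = 2 * q / (p + q) by rw [eq_div_iff hpq.ne']; linear_combination -hx_mul,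
      log_div (by positivity) hpq.ne', log_div (by positivity) hpq.ne',
      log_mul two_ne_zero hp.ne', log_mul two_ne_zero hq.ne']
    ring
  have key := two_mul_sq_le_mul_log_one_add_sub_log_one_sub hx
  rw [hlog] at key
  calc 2 * (p - q) ^ 2 = (p + q) ^ 2 * (2 * x ^ 2) := by
        linear_combination (-2 * (x * (p + q) + (p - q))) * hx_mul
    _ ≤ (p + q) ^ 2 * (x * (log p - log q)) := by gcongr
    _ = (p ^ 2 - q ^ 2) * (log p - log q) := by
        linear_combination (p + q) * (log p - log q) * hx_mul

lemma four_mul_sq_sqrt_sub_sqrt_le_sub_mul_log_sub_log {a b : ℝ} (ha : 0 < a) (hb : 0 < b) :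
    4 * (√a - √b) ^ 2 ≤ (a - b) * (log a - log b) := by
  have h := two_mul_sq_sub_le_sq_sub_sq_mul_log_sub_log (sqrt_pos.2 ha) (sqrt_pos.2 hb)
  rw [sq_sqrt ha.le, sq_sqrt hb.le, log_sqrt ha.le, log_sqrt hb.le] at h
  linarith

lemma sum_mul_sum_neg_sub_eq {G : Type*} [AddCommGroup G] [Fintype G]
    (ρ : G → ℝ) (H : G → G → ℝ) :
    ∑ j, ρ (-j) * ∑ i, H i (i - j) = ∑ j, ρ j * ∑ i, H (i - j) i := by
  rw [← Equiv.sum_comp (Equiv.neg G)]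
  refine Fintype.sum_congr _ _ fun j => ?_
  rw [← Equiv.sum_comp (Equiv.subRight j)]
  simp

/-- Cross-diffusion term identity and lower bound in the discrete entropy dissipation
estimate on the discrete torus. -/
theorem cross_diffusion_symmetrization (N : ℕ) [NeZero N]
    (ρ : ZMod N → ℝ) (hρ : ∀ j, 0 ≤ ρ j)
    (u v : ZMod N → ℝ) (hu : ∀ i, 0 < u i) (hv : ∀ i, 0 < v i) :
    (∑ j : ZMod N, ρ j * ∑ i : ZMod N,
          (u (i + 1) * v (i + 1 - j) - u i * v (i - j)) * (Real.log (u (i + 1)) - Real.log (u i))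
        + ∑ j : ZMod N, ρ (-j) * ∑ i : ZMod N,
          (v (i + 1) * u (i + 1 - j) - v i * u (i - j)) * (Real.log (v (i + 1)) - Real.log (v i))
      = ∑ j : ZMod N, ρ j * ∑ i : ZMod N,
          (u (i + 1) * v (i + 1 - j) - u i * v (i - j)) *
            (Real.log (u (i + 1) * v (i + 1 - j)) - Real.log (u i * v (i - j)))) ∧
    4 * ∑ j : ZMod N, ρ j * ∑ i : ZMod N,
        (Real.sqrt (u (i + 1) * v (i + 1 - j)) - Real.sqrt (u i * v (i - j))) ^ 2
      ≤ ∑ j : ZMod N, ρ j * ∑ i : ZMod N,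
          (u (i + 1) * v (i + 1 - j) - u i * v (i - j)) *
            (Real.log (u (i + 1) * v (i + 1 - j)) - Real.log (u i * v (i - j))) := by
  constructor
  · have hreindex := sum_mul_sum_neg_sub_eq ρ
      fun k l => (v (k + 1) * u (l + 1) - v k * u l) * (log (v (k + 1)) - log (v k))
    simp only [add_sub_right_comm _ (1 : ZMod N)] at hreindex ⊢
    rw [hreindex, ← Finset.sum_add_distrib]
    refine Fintype.sum_congr _ _ fun j => ?_
    rw [← mul_add, ← Finset.sum_add_distrib]
    congr 1
    refine Fintype.sum_congr _ _ fun i => ?_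
    rw [log_mul (hu _).ne' (hv _).ne', log_mul (hu _).ne' (hv _).ne']
    ring
  · rw [Finset.mul_sum]
    refine Finset.sum_le_sum fun j _ => ?_
    rw [mul_left_comm, Finset.mul_sum]
    refine mul_le_mul_of_nonneg_left (Finset.sum_le_sum fun i _ => ?_) (hρ j)
    exact four_mul_sq_sqrt_sub_sqrt_le_sub_mul_log_sub_log
      (mul_pos (hu _) (hv _)) (mul_pos (hu _) (hv _))
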